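/- In dimension n = 1, the Gibbons conjecture holds: if u : ℝ → ℝ is a bounded C² solution of -u'' + u³ - u = 0 with u(t) → ±1 as t → ±∞, then u(t) = tanh((t - α)/√2) for some α ∈ ℝ. -/

import Mathlib

open Filter Set Metric

lemma my_tanh_le_one (x : ℝ) : Real.tanh x ≤ 1 := by
  rw [Real.tanh_eq_sinh_div_cosh, div_le_one (Real.cosh_pos x)]
  nlinarith [Real.cosh_sub_sinh x, Real.exp_pos (-x)]

lemma my_neg_one_le_tanh (x : ℝ) : -1 ≤ Real.tanh x := by
  rw [Real.tanh_eq_sinh_div_cosh, le_div_iff₀ (Real.cosh_pos x)]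
  nlinarith [Real.cosh_add_sinh x, Real.exp_pos x]

lemma my_one_sub_exp_le_tanh (x : ℝ) : 1 - Real.exp (-x) ≤ Real.tanh x := by
  rw [Real.tanh_eq_sinh_div_cosh, le_div_iff₀ (Real.cosh_pos x)]
  nlinarith [Real.cosh_sub_sinh x, Real.one_le_cosh x, Real.exp_pos (-x)]

lemma my_tendsto_tanh_atTop : Tendsto Real.tanh atTop (nhds 1) := by
  have h1 : Tendsto (fun x : ℝ => 1 - Real.exp (-x)) atTop (nhds 1) := by
    have := Real.tendsto_exp_atBot.comp (tendsto_neg_atBot_iff.mpr tendsto_id)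
    simpa using (tendsto_const_nhds (x := (1:ℝ)) (f := atTop)).sub this
  exact tendsto_of_tendsto_of_tendsto_of_le_of_le h1 tendsto_const_nhds
    (fun x => my_one_sub_exp_le_tanh x) (fun x => my_tanh_le_one x)

lemma my_hasDerivAt_tanh (x : ℝ) : HasDerivAt Real.tanh (1 - Real.tanh x ^ 2) x := by
  have h : HasDerivAt (fun y => Real.sinh y / Real.cosh y)
      ((Real.cosh x * Real.cosh x - Real.sinh x * Real.sinh x) / Real.cosh x ^ 2) x :=
    (Real.hasDerivAt_sinh x).div (Real.hasDerivAt_cosh x) (Real.cosh_pos x).ne'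
  have heq : (fun y => Real.sinh y / Real.cosh y) = Real.tanh := by
    funext y; rw [Real.tanh_eq_sinh_div_cosh]
  rw [heq] at h
  convert h using 1
  rw [Real.tanh_eq_sinh_div_cosh]
  have hc := (Real.cosh_pos x).ne'
  field_simp

lemma my_lip (R : ℝ) :
    LipschitzOnWith (Real.toNNReal (3*R^2+1))
      (fun p : ℝ × ℝ => (p.2, p.1^3 - p.1)) (closedBall 0 R) := by
  rw [lipschitzOnWith_iff_dist_le_mul]
  intro p hp q hq
  rw [mem_closedBall_zero_iff, Prod.norm_def] at hp hq
  have hp1 : |p.1| ≤ R := le_trans (le_max_left _ _) hp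
  have hq1 : |q.1| ≤ R := le_trans (le_max_left _ _) hq
  have hK : (Real.toNNReal (3*R^2+1) : ℝ) = 3*R^2+1 := Real.coe_toNNReal _ (by positivity)
  rw [hK, Prod.dist_eq, Prod.dist_eq]
  have hd1 : dist p.1 q.1 ≤ max (dist p.1 q.1) (dist p.2 q.2) := le_max_left _ _
  have hd2 : dist p.2 q.2 ≤ max (dist p.1 q.1) (dist p.2 q.2) := le_max_right _ _
  have hdnn : (0:ℝ) ≤ max (dist p.1 q.1) (dist p.2 q.2) := le_trans dist_nonneg hd1
  apply max_le
  · nlinarith [sq_nonneg R]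
  · have h1 : dist (p.1^3 - p.1) (q.1^3 - q.1) ≤ (3*R^2+1) * dist p.1 q.1 := by
      rw [Real.dist_eq, Real.dist_eq]
      have h : p.1^3 - p.1 - (q.1^3 - q.1) = (p.1 - q.1) * (p.1^2 + p.1*q.1 + q.1^2 - 1) := by ring
      rw [h, abs_mul]
      have hb : |p.1^2 + p.1*q.1 + q.1^2 - 1| ≤ 3*R^2 + 1 := by
        rw [abs_le]
        have hp' := abs_le.mp hp1
        have hq' := abs_le.mp hq1
        constructor <;> nlinarith [sq_nonneg (p.1+q.1), sq_nonneg (p.1-q.1)]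
      calc |p.1 - q.1| * |p.1^2 + p.1*q.1 + q.1^2 - 1| ≤ |p.1 - q.1| * (3*R^2+1) :=
            mul_le_mul_of_nonneg_left hb (abs_nonneg _)
        _ = (3*R^2+1) * |p.1 - q.1| := by ring
    calc dist (p.1^3 - p.1) (q.1^3 - q.1) ≤ (3*R^2+1) * dist p.1 q.1 := h1
      _ ≤ (3*R^2+1) * max (dist p.1 q.1) (dist p.2 q.2) :=
          mul_le_mul_of_nonneg_left hd1 (by positivity)

lemma my_unique (F : ℝ × ℝ → ℝ × ℝ) (K : NNReal) (R : ℝ)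
    (hF : LipschitzOnWith K F (closedBall 0 R))
    (f g : ℝ → ℝ × ℝ)
    (hf : ∀ t, HasDerivAt f (F (f t)) t) (hfR : ∀ t, f t ∈ closedBall (0:ℝ×ℝ) R)
    (hg : ∀ t, HasDerivAt g (F (g t)) t) (hgR : ∀ t, g t ∈ closedBall (0:ℝ×ℝ) R)
    (t₀ : ℝ) (h0 : f t₀ = g t₀) : ∀ t, f t = g t := by
  intro t
  have h1 : min t t₀ - 1 < t₀ := by linarith [min_le_right t t₀]
  have h2 : t₀ < max t t₀ + 1 := by linarith [le_max_right t t₀]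
  have ht : t ∈ Icc (min t t₀ - 1) (max t t₀ + 1) :=
    ⟨by linarith [min_le_left t t₀], by linarith [le_max_left t t₀]⟩
  exact ODE_solution_unique_of_mem_Icc (v := fun _ p => F p) (s := fun _ => closedBall 0 R)
    (fun _ _ => hF) ⟨h1, h2⟩
    (fun x _ => (hf x).continuousAt.continuousWithinAt)
    (fun x _ => hf x) (fun x _ => hfR x)
    (fun x _ => (hg x).continuousAt.continuousWithinAt)
    (fun x _ => hg x) (fun x _ => hgR x) h0 ht

set_option maxHeartbeats 1000000 in
theorem stmt_10 (u : ℝ → ℝ) (hu : ContDiff ℝ 2 u)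
    (hbd : ∃ C : ℝ, ∀ t, |u t| ≤ C)
    (heq : ∀ t, -(deriv (deriv u) t) + (u t) ^ 3 - u t = 0)
    (htop : Tendsto u atTop (nhds 1)) (hbot : Tendsto u atBot (nhds (-1))) :
    ∃ α : ℝ, ∀ t, u t = Real.tanh ((t - α) / Real.sqrt 2) := by
  obtain ⟨C, hC⟩ := hbd
  have hC0 : 0 ≤ C := le_trans (abs_nonneg _) (hC 0)
  have hu1 : Differentiable ℝ u := hu.differentiable (by norm_num)
  have hu2 : Differentiable ℝ (deriv u) := by
    have h : ContDiff ℝ (1+1) u := by norm_num; exact hu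
    exact (contDiff_succ_iff_deriv.mp h).2.2.differentiable (by norm_num)
  set v : ℝ → ℝ := deriv u with hvdef
  have hdd : ∀ t, deriv v t = u t ^ 3 - u t := fun t => by linarith [heq t]
  -- Energy is constant
  have hE : ∀ t, HasDerivAt (fun t => (v t)^2 - ((u t)^2 - 1)^2 / 2) 0 t := by
    intro t
    have h1 : HasDerivAt u (v t) t := (hu1 t).hasDerivAt
    have h2 : HasDerivAt v (u t ^ 3 - u t) t := hdd t ▸ (hu2 t).hasDerivAt
    have h := (h2.pow 2).sub ((((h1.pow 2).sub_const 1).pow 2).div_const 2)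
    refine h.congr_deriv ?_
    simp only [Pi.pow_apply]
    push_cast
    ring
  obtain ⟨c, hEconst⟩ : ∃ c : ℝ, ∀ t, (v t)^2 - ((u t)^2 - 1)^2 / 2 = c :=
    ⟨_, fun t => is_const_of_deriv_eq_zero
      (fun x => (hE x).differentiableAt) (fun x => (hE x).deriv) t 0⟩
  -- c = 0
  have hq : Tendsto (fun t => ((u t)^2 - 1)^2 / 2) atTop (nhds 0) := by
    have h : Tendsto (fun t => ((u t)^2 - 1)^2 / 2) atTop (nhds ((((1:ℝ)^2 - 1)^2)/2)) :=
      (((htop.pow 2).sub_const 1).pow 2).div_const 2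
    simpa using h
  have hv2 : Tendsto (fun t => (v t)^2) atTop (nhds c) := by
    have h : Tendsto (fun t => ((v t)^2 - ((u t)^2 - 1)^2 / 2) + ((u t)^2 - 1)^2 / 2)
        atTop (nhds (c + 0)) :=
      (tendsto_const_nhds.congr (fun t => (hEconst t).symm)).add hq
    simpa using h
  have hc0 : 0 ≤ c := ge_of_tendsto' hv2 (fun t => sq_nonneg _)
  have hc : c = 0 := by
    by_contra hne
    have hcpos : 0 < c := lt_of_le_of_ne hc0 (Ne.symm hne)
    obtain ⟨T, hT⟩ := eventually_atTop.mp
      (hv2.eventually (eventually_gt_nhds (by linarith : c/2 < c)))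
    obtain ⟨δ, hδdef⟩ : ∃ δ : ℝ, δ = Real.sqrt (c/2) := ⟨_, rfl⟩
    have hδ : 0 < δ := hδdef ▸ Real.sqrt_pos.mpr (by linarith)
    obtain ⟨t1, ht1⟩ : ∃ t1 : ℝ, t1 = T + (4*C+1)/δ + 1 := ⟨_, rfl⟩
    have hTt : T < t1 := by
      have h : 0 < (4*C+1)/δ := by positivity
      rw [ht1]; linarith
    obtain ⟨x, hx, hslope⟩ := exists_hasDerivAt_eq_slope u v hTt
      hu1.continuous.continuousOn (fun y _ => (hu1 y).hasDerivAt)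
    have hvx : δ ≤ |v x| := by
      rw [hδdef, ← Real.sqrt_sq_eq_abs]
      exact Real.sqrt_le_sqrt (le_of_lt (hT x (le_of_lt hx.1)))
    have habs : |u t1 - u T| ≤ 2*C := by
      calc |u t1 - u T| ≤ |u t1| + |u T| := abs_sub _ _
        _ ≤ 2*C := by linarith [hC t1, hC T]
    have hmeq : |v x| * (t1 - T) = |u t1 - u T| := by
      rw [hslope, abs_div, abs_of_pos (by linarith : (0:ℝ) < t1 - T)]
      rw [div_mul_eq_mul_div, mul_div_assoc,
        div_self (by linarith : t1 - T ≠ 0), mul_one]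
    have h1 : δ * (t1 - T) ≤ 2*C := by nlinarith [abs_nonneg (v x)]
    have h2 : δ * (t1 - T) = 4*C + 1 + δ := by
      have h : t1 - T = (4*C+1)/δ + 1 := by rw [ht1]; ring
      rw [h]; field_simp
    linarith
  have hEq : ∀ t, (v t)^2 = ((u t)^2 - 1)^2 / 2 := fun t => by
    have := hEconst t; rw [hc] at this; linarith
  -- find a zero of u
  obtain ⟨b, hb⟩ := (htop.eventually (eventually_gt_nhds (by norm_num : (0:ℝ) < 1))).exists
  obtain ⟨A, hA⟩ := eventually_atBot.mp
    (hbot.eventually (eventually_lt_nhds (by norm_num : (-1:ℝ) < 0)))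
  have hab : min A b ≤ b := min_le_right _ _
  have hua : u (min A b) < 0 := hA _ (min_le_left _ _)
  obtain ⟨t₀, -, ht₀⟩ := intermediate_value_Icc hab hu1.continuous.continuousOn
    ⟨le_of_lt hua, le_of_lt hb⟩
  -- value of derivative at t₀
  have hs2 : (0:ℝ) < Real.sqrt 2 := Real.sqrt_pos.mpr (by norm_num)
  have hs2sq : Real.sqrt 2 * Real.sqrt 2 = 2 := Real.mul_self_sqrt (by norm_num)
  have hvt₀ : (v t₀)^2 = 1/2 := by rw [hEq t₀, ht₀]; norm_num
  have hcase : v t₀ = 1 * (1/Real.sqrt 2) ∨ v t₀ = (-1) * (1/Real.sqrt 2) := by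
    have h2 : (1/Real.sqrt 2)^2 = 1/2 := by
      rw [div_pow, one_pow, sq, hs2sq]
    have hz : (v t₀ - 1/Real.sqrt 2) * (v t₀ + 1/Real.sqrt 2) = 0 := by nlinarith
    rcases mul_eq_zero.mp hz with h | h
    · left; linarith
    · right; linarith
  -- key uniqueness step
  have key : ∀ ε : ℝ, ε^2 = 1 → v t₀ = ε * (1/Real.sqrt 2) →
      ∀ t, u t = ε * Real.tanh ((t - t₀)/Real.sqrt 2) := by
    intro ε hε hvt
    have hεabs : |ε| = 1 := by
      rw [← Real.sqrt_one, ← hε, Real.sqrt_sq_eq_abs]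
    set R : ℝ := C^2 + C + 2 with hRdef
    set w : ℝ → ℝ := fun t => Real.tanh ((t - t₀)/Real.sqrt 2) with hwdef
    have hw : ∀ t, HasDerivAt w ((1 - w t ^ 2) * (1/Real.sqrt 2)) t := by
      intro t
      have hξ : HasDerivAt (fun t : ℝ => (t - t₀)/Real.sqrt 2) (1/Real.sqrt 2) t := by
        simpa using ((hasDerivAt_id t).sub_const t₀).div_const (Real.sqrt 2)
      exact (my_hasDerivAt_tanh _).comp t hξ
    have hw1 : ∀ t, |w t| ≤ 1 := fun t =>
      abs_le.mpr ⟨my_neg_one_le_tanh _, my_tanh_le_one _⟩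
    set U : ℝ → ℝ × ℝ := fun t => (u t, v t) with hUdef
    set G : ℝ → ℝ × ℝ := fun t => (ε * w t, ε * ((1 - w t ^ 2) * (1/Real.sqrt 2))) with hGdef
    set F : ℝ × ℝ → ℝ × ℝ := fun p => (p.2, p.1^3 - p.1) with hFdef
    have hU : ∀ t, HasDerivAt U (F (U t)) t := fun t =>
      ((hu1 t).hasDerivAt.prodMk (hdd t ▸ (hu2 t).hasDerivAt))
    have hG : ∀ t, HasDerivAt G (F (G t)) t := by
      intro t
      apply HasDerivAt.prodMk
      · exact (hw t).const_mul ε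
      · have h := ((((hw t).pow 2).const_sub 1).mul_const (1/Real.sqrt 2)).const_mul ε
        refine h.congr_deriv (Eq.symm ?_)
        show (ε * w t)^3 - ε * w t = _
        push_cast
        field_simp
        linear_combination (ε ^ 3 * w t ^ 3 - ε * w t) * (Real.sq_sqrt (by norm_num : (0:ℝ) ≤ 2)) + (2 * ε * w t ^ 3) * hε
    have hvb : ∀ t, |v t| ≤ C^2 + 1 := by
      intro t
      have h1 : (v t)^2 ≤ (C^2+1)^2 := by
        have h := abs_le.mp (hC t)
        have hu2le : u t^2 ≤ C^2 := by nlinarith [h.1, h.2]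
        have h3 : 0 ≤ (C^2+2-u t^2)*(C^2+u t^2) := mul_nonneg (by nlinarith) (by positivity)
        rw [hEq t]; nlinarith [h3]
      rw [abs_le]
      constructor <;> nlinarith [sq_nonneg (v t + (C^2+1)), sq_nonneg (v t - (C^2+1))]
    have hUR : ∀ t, U t ∈ closedBall (0:ℝ×ℝ) R := by
      intro t
      simp only [mem_closedBall_zero_iff, Prod.norm_def, Real.norm_eq_abs]
      apply max_le
      · exact le_trans (hC t) (by nlinarith)
      · exact le_trans (hvb t) (by nlinarith)
    have hw2 : ∀ t, 0 ≤ 1 - w t^2 ∧ 1 - w t^2 ≤ 1 := by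
      intro t
      constructor <;> nlinarith [hw1 t, sq_abs (w t), abs_nonneg (w t), sq_nonneg (w t)]
    have hGR : ∀ t, G t ∈ closedBall (0:ℝ×ℝ) R := by
      intro t
      simp only [mem_closedBall_zero_iff, Prod.norm_def, Real.norm_eq_abs]
      have hs21 : 1 ≤ Real.sqrt 2 := by nlinarith
      apply max_le
      · rw [abs_mul, hεabs, one_mul]
        exact le_trans (hw1 t) (by nlinarith)
      · rw [abs_mul, hεabs, one_mul, abs_mul]
        rw [abs_of_nonneg (hw2 t).1, abs_of_nonneg (by positivity : (0:ℝ) ≤ 1/Real.sqrt 2)]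
        have h : (1 - w t^2) * (1/Real.sqrt 2) ≤ 1 * 1 := by
          apply mul_le_mul (hw2 t).2 _ (by positivity) (by norm_num)
          rw [div_le_one hs2]; linarith
        nlinarith
    have hwt₀ : w t₀ = 0 := by
      simp only [hwdef]
      rw [sub_self, zero_div, Real.tanh_zero]
    have h0 : U t₀ = G t₀ := by
      simp only [hUdef, hGdef, hwt₀, ht₀]
      rw [Prod.mk.injEq]
      refine ⟨by ring, by rw [hvt]; ring⟩
    have hall := my_unique F (Real.toNNReal (3*R^2+1)) R (my_lip R) U G hU hUR hG hGR t₀ h0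
    intro t
    have h := congrArg Prod.fst (hall t)
    simpa using h
  rcases hcase with h | h
  · refine ⟨t₀, fun t => ?_⟩
    have := key 1 (by norm_num) h t
    simpa using this
  · exfalso
    have hneg := key (-1) (by norm_num) h
    have hξ : Tendsto (fun t : ℝ => (t - t₀)/Real.sqrt 2) atTop atTop := by
      apply Tendsto.atTop_div_const hs2
      exact tendsto_atTop_add_const_right atTop (-t₀) tendsto_id |>.congr (fun t => by simp only [id_eq]; ring)
    have hlim : Tendsto (fun t : ℝ => (-1 : ℝ) * Real.tanh ((t - t₀)/Real.sqrt 2))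
        atTop (nhds (-1)) := by
      have h2 := (my_tendsto_tanh_atTop.comp hξ).const_mul (-1 : ℝ)
      simpa using h2
    have h1 : Tendsto u atTop (nhds (-1)) := hlim.congr (fun t => (hneg t).symm)
    have h2 := tendsto_nhds_unique htop h1
    norm_num at h2
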